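/- arXiv:1510.03277 — 5 statements merged into one kernel-verified Lean document; each statement's English description precedes it below -/
import Mathlib

section
/- Let m_1 < m_2 < ... < m_K be pairwise coprime positive integers with m_1 ≥ 3 and K > 2, let M be a positive integer, and let d = min over subsets I of {1,...,K} of (∏_{i∈I} m_i + ∏_{i∉I} m_i). Then there exist two distinct 2-element subsets A and B of {0, 1, ..., M·d} such that for every k, the set of residues of elements of A modulo M·m_k equals the set of residues of elements of B modulo M·m_k. (Specifically, A = {0, M·d} and B = {M·d_1, M·d_2} works, where d = d_1 + d_2 with d_1 = ∏_{i∈I} m_i and d_2 = ∏_{i∉I} m_i achieving the minimum.) -/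
/-- upper bound for dynamic range: two distinct 2-sets within
`[0, M*d]` with equal residue sets modulo every `M * m k`. -/
theorem stmt_0 (K M d : ℕ) (m : Fin K → ℕ)
    (hK : 2 < K) (hM : 0 < M)
    (hmono : StrictMono m) (hm1 : 3 ≤ m ⟨0, by omega⟩)
    (hcop : ∀ i j, i ≠ j → Nat.Coprime (m i) (m j))
    (hd : IsLeast {x : ℕ | ∃ I : Finset (Fin K),
      x = (∏ i ∈ I, m i) + ∏ i ∈ Iᶜ, m i} d) :
    ∃ A B : Finset ℕ, A ≠ B ∧ A.card = 2 ∧ B.card = 2 ∧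
      (∀ a ∈ A, a ≤ M * d) ∧ (∀ b ∈ B, b ≤ M * d) ∧
      ∀ k : Fin K, A.image (· % (M * m k)) = B.image (· % (M * m k)) := by
  obtain ⟨⟨I, hI⟩, -⟩ := hd
  set d1 := ∏ i ∈ I, m i with hd1
  set d2 := ∏ i ∈ Iᶜ, m i with hd2
  have hm3 : ∀ i, 3 ≤ m i := fun i =>
    le_trans hm1 (hmono.monotone (Fin.mk_le_of_le_val (Nat.zero_le _)))
  have hd1pos : 0 < d1 := Finset.prod_pos fun i _ => by have := hm3 i; omega
  have hd2pos : 0 < d2 := Finset.prod_pos fun i _ => by have := hm3 i; omega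
  have cop : Nat.Coprime d1 d2 :=
    Nat.Coprime.prod_left fun i hi => Nat.Coprime.prod_right fun j hj =>
      hcop i j (by rintro rfl; exact (Finset.mem_compl.mp hj) hi)
  have hbig : 3 ≤ d1 ∨ 3 ≤ d2 := by
    by_cases h0 : (⟨0, by omega⟩ : Fin K) ∈ I
    · left
      exact le_trans (hm3 _) (Finset.single_le_prod' (fun i _ => by have := hm3 i; omega) h0)
    · right
      exact le_trans (hm3 _)
        (Finset.single_le_prod' (fun i _ => by have := hm3 i; omega) (Finset.mem_compl.mpr h0))
  have hne12 : d1 ≠ d2 := by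
    intro h
    rw [h] at cop
    simp [Nat.Coprime, Nat.gcd_self] at cop
    omega
  refine ⟨{0, M * d}, {M * d1, M * d2}, ?_, ?_, ?_, ?_, ?_, ?_⟩
  · intro h
    have h0 : (0 : ℕ) ∈ ({M * d1, M * d2} : Finset ℕ) := h ▸ Finset.mem_insert_self _ _
    simp only [Finset.mem_insert, Finset.mem_singleton] at h0
    rcases h0 with h0 | h0 <;> [skip; skip] <;>
      · have := Nat.mul_pos hM (by omega : 0 < d1) <;> nlinarith [Nat.mul_pos hM hd1pos, Nat.mul_pos hM hd2pos]
  · exact Finset.card_pair (Nat.mul_pos hM (by omega : 0 < d)).ne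
  · exact Finset.card_pair fun h => hne12 (Nat.eq_of_mul_eq_mul_left hM h)
  · intro a ha
    simp only [Finset.mem_insert, Finset.mem_singleton] at ha
    rcases ha with rfl | rfl <;> omega
  · intro b hb
    simp only [Finset.mem_insert, Finset.mem_singleton] at hb
    rcases hb with rfl | rfl <;> subst hI <;> nlinarith
  · intro k
    by_cases hk : k ∈ I
    · have h1 : (M * d1) % (M * m k) = 0 :=
        Nat.mod_eq_zero_of_dvd (Nat.mul_dvd_mul_left M (Finset.dvd_prod_of_mem m hk))
      have h2 : (M * d) % (M * m k) = (M * d2) % (M * m k) := by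
        rw [hI, Nat.mul_add, Nat.add_mod, h1, Nat.zero_add, Nat.mod_mod_of_dvd _ dvd_rfl]
      simp only [Finset.image_insert, Finset.image_singleton]
      rw [h2, Nat.zero_mod, h1]
    · have h1 : (M * d2) % (M * m k) = 0 :=
        Nat.mod_eq_zero_of_dvd
          (Nat.mul_dvd_mul_left M (Finset.dvd_prod_of_mem m (Finset.mem_compl.mpr hk)))
      have h2 : (M * d) % (M * m k) = (M * d1) % (M * m k) := by
        rw [hI, Nat.mul_add, Nat.add_mod, h1, Nat.add_zero, Nat.mod_mod_of_dvd _ dvd_rfl]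
      simp only [Finset.image_insert, Finset.image_singleton]
      rw [h2, Nat.zero_mod, h1, Finset.pair_comm]
end

section
/- Let M > 0, q an integer, and let r_1^c, r_2^c ∈ [0, M) with 3M/4 < r_2^c − r_1^c < M. Let τ < M/8 and let Δ, ε be reals with |Δ| ≤ τ, |ε| ≤ τ. If r̃ = M·q + r_2^c + Δ and ω̄ = r_1^c + ε, then [ (r̃ − ω̄)/M ] = q + 1; if instead ω̄' = r_2^c − M + ε then [ (r̃ − ω̄')/M ] = q + 1 as well. -/
/-! Both numerators differ from `M * (q + 1)` by less than `M / 2`: in the first case by the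
wrap-around offset `r2 - r1 - M ∈ (-M/4, 0)` plus noise `Δ - ε` of size `< M/4`, in the second
by the noise alone. -/

lemma Int.eq_of_abs_sub_le_half_of_abs_sub_lt_half {z : ℝ} {m n : ℤ}
    (hm : |z - m| ≤ 1 / 2) (hn : |z - n| < 1 / 2) : m = n := by
  have hmn : |((m - n : ℤ) : ℝ)| < 1 := by
    push_cast
    calc |(m : ℝ) - n| = |(z - n) - (z - m)| := by ring_nf
      _ ≤ |z - n| + |z - m| := abs_sub _ _
      _ < 1 := by linarith
  rw [← Int.cast_abs, ← Int.cast_one, Int.cast_lt, abs_lt] at hmn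
  omega

lemma rnd_div_eq_of_abs_sub_lt (rnd : ℝ → ℤ)
    (hrnd : ∀ z : ℝ, -(1/2) ≤ z - rnd z ∧ z - rnd z < 1/2)
    {M x : ℝ} (hM : 0 < M) {n : ℤ} (hx : |x - M * n| < M / 2) : rnd (x / M) = n := by
  refine Int.eq_of_abs_sub_le_half_of_abs_sub_lt_half (z := x / M)
    (abs_le.mpr ⟨(hrnd _).1, (hrnd _).2.le⟩) ?_
  rwa [show x / M - n = (x - M * n) / M by field_simp, abs_div, abs_of_pos hM,
    div_lt_iff₀ hM, div_mul_eq_mul_div, one_mul]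

theorem stmt_12_general (M τ : ℝ) (hM : 0 < M) (q : ℤ) (r1 r2 Δ ε rt ω ω' : ℝ)
    (hsep : 3 * M / 4 < r2 - r1) (hsep' : r2 - r1 < M)
    (hτ : τ < M / 8) (hΔ : |Δ| ≤ τ) (hε : |ε| ≤ τ)
    (rnd : ℝ → ℤ) (hrnd : ∀ z : ℝ, -(1/2) ≤ z - rnd z ∧ z - rnd z < 1/2)
    (hr : rt = M * q + r2 + Δ) (hω : ω = r1 + ε) (hω' : ω' = r2 - M + ε) :
    rnd ((rt - ω) / M) = q + 1 ∧ rnd ((rt - ω') / M) = q + 1 := by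
  have hnoise : |Δ - ε| < M / 4 := by
    linarith [abs_sub Δ ε]
  constructor
  · refine rnd_div_eq_of_abs_sub_lt rnd hrnd hM ?_
    have hwrap : rt - ω - M * ↑(q + 1) = (r2 - r1 - M) + (Δ - ε) := by
      rw [hr, hω]; push_cast; ring
    rw [hwrap, abs_lt]
    rw [abs_lt] at hnoise
    constructor <;> linarith
  · refine rnd_div_eq_of_abs_sub_lt rnd hrnd hM ?_
    have hexact : rt - ω' - M * ↑(q + 1) = Δ - ε := by
      rw [hr, hω']; push_cast; ring
    rw [hexact]
    linarith

/-- off-by-one quotient recovery in the wrap-around case. -/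
theorem stmt_12 (M τ : ℝ) (hM : 0 < M) (q : ℤ) (r1 r2 Δ ε rt ω ω' : ℝ)
    (h1 : 0 ≤ r1) (h1' : r1 < M) (h2 : 0 ≤ r2) (h2' : r2 < M)
    (hsep : 3 * M / 4 < r2 - r1) (hsep' : r2 - r1 < M)
    (hτ : τ < M / 8) (hΔ : |Δ| ≤ τ) (hε : |ε| ≤ τ)
    (rnd : ℝ → ℤ) (hrnd : ∀ z : ℝ, -(1/2) ≤ z - rnd z ∧ z - rnd z < 1/2)
    (hr : rt = M * q + r2 + Δ) (hω : ω = r1 + ε) (hω' : ω' = r2 - M + ε) :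
    rnd ((rt - ω) / M) = q + 1 ∧ rnd ((rt - ω') / M) = q + 1 :=
  stmt_12_general M τ hM q r1 r2 Δ ε rt ω ω' hsep hsep' hτ hΔ hε rnd hrnd hr hω hω'
end

section
/- Let m_1 < ... < m_K be pairwise coprime positive integers with m_1 ≥ 3 and K > 2, M a positive integer, d = min_I (∏_{i∈I} m_i + ∏_{i∉I} m_i). Let N_1, N_2 be nonnegative integers with N_1, N_2 < M·d and N_1 ≡ N_2 (mod M) with common remainder r^c. Set Q_l = (N_l − r^c)/M for l = 1, 2. Then Q_1, Q_2 < d, and {Q_1, Q_2} is uniquely determined by the residue sets {Q_1 mod m_k, Q_2 mod m_k} for k = 1,...,K; consequently {N_1, N_2} is uniquely determined by the residue sets {N_1 mod (M m_k), N_2 mod (M m_k)}. -/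
/-!
On every modulus `m i` the residue pair of `(u, v)` matches that of `(a, b)` either straight or
crossed, so `u + v ≡ a + b` modulo every `m i`, hence modulo their product `P`. With at least
three moduli, all `≥ 3`, the bound `d ≤ m₀ + P / m₀` gives `2d ≤ P`, so in fact `u + v = a + b`.
Let `I` be the moduli on which `u ≡ a`; then `u ≡ a` modulo `∏_I m` and `u ≡ b` modulo
`∏_{Iᶜ} m`. If `u` were neither `a` nor `b`, these two distances would add up, in one of `u`, `v`,
`a`, `b` or `|a - b|`, to at least `∏_I m + ∏_{Iᶜ} m ≥ d`. Writing `N = M Q + r`, the residue of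
`N` modulo `M m k` encodes both `r` and the residue of `Q` modulo `m k`, which lifts the result
from the quotients `Q` to the `N`.
-/

open Function Finset

theorem Finset.image_pair_eq_image_pair_iff {α β : Type*} [DecidableEq α] [DecidableEq β]
    {f : α → β} {u v a b : α} :
    ({u, v} : Finset α).image f = ({a, b} : Finset α).image f ↔
      f u = f a ∧ f v = f b ∨ f u = f b ∧ f v = f a := by
  simp only [image_insert, image_singleton, ← coe_inj, coe_pair, Set.pair_eq_pair_iff]

theorem Nat.modEq_prod_of_pairwise_coprime {ι : Type*} {m : ι → ℕ}
    (hcop : Pairwise (Nat.Coprime on m)) (s : Finset ι) {a b : ℕ}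
    (h : ∀ i ∈ s, a ≡ b [MOD m i]) : a ≡ b [MOD ∏ i ∈ s, m i] := by
  rw [Nat.modEq_iff_dvd, Nat.cast_prod]
  exact prod_dvd_of_coprime (fun i _ j _ hij => Nat.isCoprime_iff_coprime.2 (hcop hij))
    fun i hi => Nat.modEq_iff_dvd.1 (h i hi)

theorem Nat.eq_or_eq_of_modEq_of_add_eq {p q u v a b : ℕ} (hp : u ≡ a [MOD p])
    (hq : u ≡ b [MOD q]) (hsum : u + v = a + b) (hu : u < p + q) (hv : v < p + q)
    (ha : a < p + q) (hb : b < p + q) : u = a ∨ u = b := by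
  by_contra! hne
  have hpa : (p : ℤ) ≤ |(a : ℤ) - u| := not_lt.1 fun h => hne.1 (hp.eq_of_abs_lt h)
  have hqb : (q : ℤ) ≤ |(b : ℤ) - u| := not_lt.1 fun h => hne.2 (hq.eq_of_abs_lt h)
  cases abs_cases ((a : ℤ) - u) <;> cases abs_cases ((b : ℤ) - u) <;> omega

section SplitBound

variable {ι : Type*} [Fintype ι] [DecidableEq ι] {m : ι → ℕ} {d : ℕ}

theorem two_mul_le_prod_of_forall_le_prod_add_prod (hm : ∀ i, 3 ≤ m i)
    (hcard : 3 ≤ Fintype.card ι)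
    (hsplit : ∀ I : Finset ι, d ≤ (∏ i ∈ I, m i) + ∏ i ∈ Iᶜ, m i) :
    2 * d ≤ ∏ i, m i := by
  obtain ⟨i₀⟩ := Fintype.card_pos_iff.1 (by omega : 0 < Fintype.card ι)
  have hrest : 9 ≤ ∏ i ∈ {i₀}ᶜ, m i :=
    calc 9 = 3 ^ 2 := rfl
      _ ≤ 3 ^ ({i₀}ᶜ : Finset ι).card := by
        rw [card_compl, card_singleton]
        exact Nat.pow_le_pow_right (by norm_num) (by omega)
      _ ≤ ∏ i ∈ {i₀}ᶜ, m i := pow_card_le_prod _ _ _ fun i _ => hm i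
  have hd := hsplit {i₀}
  rw [prod_singleton] at hd
  rw [Fintype.prod_eq_mul_prod_compl i₀]
  nlinarith [hm i₀]

theorem pair_eq_of_image_mod_eq (hcop : Pairwise (Nat.Coprime on m))
    (hsplit : ∀ I : Finset ι, d ≤ (∏ i ∈ I, m i) + ∏ i ∈ Iᶜ, m i)
    (hprod : 2 * d ≤ ∏ i, m i) {u v a b : ℕ} (hu : u < d) (hv : v < d) (ha : a < d)
    (hb : b < d)
    (h : ∀ i, ({u, v} : Finset ℕ).image (· % m i) = ({a, b} : Finset ℕ).image (· % m i)) :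
    ({u, v} : Finset ℕ) = {a, b} := by
  have hres := fun i => image_pair_eq_image_pair_iff.1 (h i)
  have hsum : u + v = a + b := by
    refine Nat.ModEq.eq_of_lt_of_lt (m := ∏ i, m i) ?_ (by omega) (by omega)
    refine Nat.modEq_prod_of_pairwise_coprime hcop _ fun i _ => ?_
    rcases hres i with ⟨hua, hvb⟩ | ⟨hub, hva⟩
    · exact Nat.ModEq.add hua hvb
    · exact (Nat.ModEq.add hub hva).trans (by rw [add_comm])
  set I := univ.filter fun i => u ≡ a [MOD m i]
  have hua : u ≡ a [MOD ∏ i ∈ I, m i] :=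
    Nat.modEq_prod_of_pairwise_coprime hcop I fun i hi => (mem_filter.1 hi).2
  have hub : u ≡ b [MOD ∏ i ∈ Iᶜ, m i] := by
    refine Nat.modEq_prod_of_pairwise_coprime hcop Iᶜ fun i hi => ?_
    have hi : ¬u ≡ a [MOD m i] := by simpa [I] using hi
    exact ((hres i).resolve_left fun h => hi h.1).1
  have hI := hsplit I
  rcases Nat.eq_or_eq_of_modEq_of_add_eq hua hub hsum (by omega) (by omega) (by omega)
    (by omega) with rfl | rfl
  · rw [Nat.add_left_cancel hsum]
  · rw [show v = a by omega, pair_comm]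

end SplitBound

theorem Finset.image_pair_mod_mul_div (M n a b : ℕ) :
    (({a, b} : Finset ℕ).image (· % (M * n))).image (· / M) =
      ({a / M, b / M} : Finset ℕ).image (· % n) := by
  simp only [image_insert, image_singleton, Nat.mod_mul_right_div_self]

theorem Finset.image_pair_mod_mul_mod (M n a b : ℕ) :
    (({a, b} : Finset ℕ).image (· % (M * n))).image (· % M) =
      ({a, b} : Finset ℕ).image (· % M) := by
  simp only [image_insert, image_singleton, Nat.mod_mul_right_mod]

theorem Nat.pair_eq_of_image_div_eq_of_image_mod_eq {M a b c e : ℕ}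
    (hdiv : ({a, b} : Finset ℕ).image (· / M) = ({c, e} : Finset ℕ).image (· / M))
    (hmod : ({a, b} : Finset ℕ).image (· % M) = ({c, e} : Finset ℕ).image (· % M))
    (hce : c % M = e % M) : ({a, b} : Finset ℕ) = {c, e} := by
  have hmod' : a % M = c % M ∧ b % M = c % M := by
    rcases image_pair_eq_image_pair_iff.1 hmod with h | h <;> omega
  rcases image_pair_eq_image_pair_iff.1 hdiv with ⟨hac, hbe⟩ | ⟨hae, hbc⟩
  · rw [Nat.ext_div_mod hac hmod'.1, Nat.ext_div_mod hbe (hmod'.2.trans hce)]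
  · rw [Nat.ext_div_mod hae (hmod'.1.trans hce), Nat.ext_div_mod hbc hmod'.2, pair_comm]

/-- part 2 of Corollary 1: equal common remainders, unique
determination within the dynamic range `M·d`. -/
theorem stmt_13 (K M d : ℕ) (m : Fin K → ℕ)
    (hK : 2 < K)
    (hmono : StrictMono m) (hm1 : 3 ≤ m ⟨0, by omega⟩)
    (hcop : ∀ i j, i ≠ j → Nat.Coprime (m i) (m j))
    (hd : IsLeast {x : ℕ | ∃ I : Finset (Fin K),
      x = (∏ i ∈ I, m i) + ∏ i ∈ Iᶜ, m i} d)
    (N1 N2 rc Q1 Q2 : ℕ)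
    (hN1 : N1 < M * d) (hN2 : N2 < M * d)
    (hrc1 : N1 % M = rc) (hrc2 : N2 % M = rc)
    (hQ1 : Q1 = (N1 - rc) / M) (hQ2 : Q2 = (N2 - rc) / M) :
    Q1 < d ∧ Q2 < d ∧
    (∀ Q1' Q2' : ℕ, Q1' < d → Q2' < d →
      (∀ k : Fin K,
        ({Q1', Q2'} : Finset ℕ).image (· % m k) =
        ({Q1, Q2} : Finset ℕ).image (· % m k)) →
      ({Q1', Q2'} : Finset ℕ) = ({Q1, Q2} : Finset ℕ)) ∧
    (∀ N1' N2' : ℕ, N1' < M * d → N2' < M * d →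
      (∀ k : Fin K,
        ({N1', N2'} : Finset ℕ).image (· % (M * m k)) =
        ({N1, N2} : Finset ℕ).image (· % (M * m k))) →
      ({N1', N2'} : Finset ℕ) = ({N1, N2} : Finset ℕ)) := by
  have hcop' : Pairwise (Nat.Coprime on m) := fun i j => hcop i j
  have hm : ∀ i, 3 ≤ m i := fun i => hm1.trans (hmono.monotone (Nat.zero_le i.val))
  have hsplit : ∀ I : Finset (Fin K), d ≤ (∏ i ∈ I, m i) + ∏ i ∈ Iᶜ, m i :=
    fun I => hd.2 ⟨I, rfl⟩
  have hprod : 2 * d ≤ ∏ i, m i :=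
    two_mul_le_prod_of_forall_le_prod_add_prod hm (by rw [Fintype.card_fin]; exact hK) hsplit
  have hlt : ∀ {N : ℕ}, N < M * d → N / M < d := Nat.div_lt_of_lt_mul
  rw [← hrc1, ← Nat.div_eq_sub_mod_div] at hQ1
  rw [← hrc2, ← Nat.div_eq_sub_mod_div] at hQ2
  subst hQ1 hQ2
  refine ⟨hlt hN1, hlt hN2, fun Q1' Q2' h1 h2 hk =>
    pair_eq_of_image_mod_eq hcop' hsplit hprod h1 h2 (hlt hN1) (hlt hN2) hk,
    fun N1' N2' h1 h2 hk => ?_⟩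
  have hdiv : ({N1' / M, N2' / M} : Finset ℕ) = {N1 / M, N2 / M} :=
    pair_eq_of_image_mod_eq hcop' hsplit hprod (hlt h1) (hlt h2) (hlt hN1) (hlt hN2) fun k => by
      rw [← image_pair_mod_mul_div M, hk k, image_pair_mod_mul_div]
  refine Nat.pair_eq_of_image_div_eq_of_image_mod_eq ?_ ?_ (hrc1.trans hrc2.symm)
  · simpa only [image_insert, image_singleton] using hdiv
  · rw [← image_pair_mod_mul_mod M (m ⟨0, by omega⟩), hk, image_pair_mod_mul_mod]
end

section
/- Let M ≥ 1 and suppose 0 ≤ r_2^c − r_1^c < M/4 with r_1^c, r_2^c ∈ [0, M), and all errors |Δ r_{l,k}| < M/8 (l = 1,2; k = 1,...,K). Sort the 2K values {r_1^c + Δ r_{1,k}} ∪ {r_2^c + Δ r_{2,k}} in increasing order as c_1 ≤ ... ≤ c_{2K}. Then 0 ≤ c_{2K} − c_1 < M/2, and the first K values {c_1,...,c_K} and last K values {c_{K+1},...,c_{2K}} each have diameter at most 2τ, where τ = max |Δ r_{l,k}|. -/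
/-- sorted erroneous common remainders when the true common
remainders are close: total span `< M/2`, each half has diameter `≤ 2τ`. -/
theorem stmt_14 (K : ℕ) (hK : 0 < K) (M τ : ℝ) (hM : 1 ≤ M)
    (r1 r2 : ℝ) (h1 : 0 ≤ r1) (h1' : r1 < M) (h2 : 0 ≤ r2) (h2' : r2 < M)
    (hsep : 0 ≤ r2 - r1) (hsep' : r2 - r1 < M / 4)
    (Δ1 Δ2 : Fin K → ℝ) (hΔ1 : ∀ k, |Δ1 k| ≤ τ) (hΔ2 : ∀ k, |Δ2 k| ≤ τ)
    (hτ : τ < M / 8)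
    (c : ℕ → ℝ) (hmono : ∀ i j, i ≤ j → j < 2 * K → c i ≤ c j)
    (e : Fin (2 * K) ≃ (Fin K ⊕ Fin K))
    (hc : ∀ i : Fin (2 * K),
      c i = Sum.elim (fun k => r1 + Δ1 k) (fun k => r2 + Δ2 k) (e i)) :
    (0 ≤ c (2 * K - 1) - c 0 ∧ c (2 * K - 1) - c 0 < M / 2) ∧
    c (K - 1) - c 0 ≤ 2 * τ ∧ c (2 * K - 1) - c K ≤ 2 * τ := by
  have hτ0 : 0 ≤ τ := le_trans (abs_nonneg _) (hΔ1 ⟨0, hK⟩)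
  have hr12 : r1 ≤ r2 := by linarith
  have hK2 : 0 < 2 * K := by omega
  have hub : ∀ i : Fin (2 * K), c i ≤ r2 + τ := by
    intro i
    rw [hc i]
    rcases h : e i with k | k
    · simp only [Sum.elim_inl]
      have := abs_le.mp (hΔ1 k)
      linarith [this.2]
    · simp only [Sum.elim_inr]
      have := abs_le.mp (hΔ2 k)
      linarith [this.2]
  have hlb : ∀ i : Fin (2 * K), r1 - τ ≤ c i := by
    intro i
    rw [hc i]
    rcases h : e i with k | k
    · simp only [Sum.elim_inl]
      have := abs_le.mp (hΔ1 k)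
      linarith [this.1]
    · simp only [Sum.elim_inr]
      have := abs_le.mp (hΔ2 k)
      linarith [this.1]
  -- K of the values are ≤ r1 + τ
  have hS1 : ∃ j : Fin (2 * K), c j ≤ r1 + τ ∧ K - 1 ≤ (j : ℕ) := by
    set S : Finset (Fin (2 * K)) := Finset.univ.filter (fun i => c i ≤ r1 + τ) with hSdef
    have hmem : ∀ k : Fin K, e.symm (Sum.inl k) ∈ S := by
      intro k
      simp only [hSdef, Finset.mem_filter, Finset.mem_univ, true_and]
      have h := hc (e.symm (Sum.inl k))
      rw [Equiv.apply_symm_apply] at h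
      simp only [Sum.elim_inl] at h
      have h2 := abs_le.mp (hΔ1 k)
      linarith [h2.2]
    have hcard : K ≤ S.card := by
      calc K = (Finset.univ : Finset (Fin K)).card := by simp
        _ ≤ S.card := Finset.card_le_card_of_injOn (fun k => e.symm (Sum.inl k))
            (fun k _ => hmem k)
            (fun a _ b _ h => by
              have := e.symm.injective h
              exact Sum.inl_injective this)
    by_contra hcon
    push_neg at hcon
    have hsub : S.image Fin.val ⊆ Finset.range (K - 1) := by
      intro n hn
      simp only [Finset.mem_image] at hn
      obtain ⟨j, hj, rfl⟩ := hn
      have hj' : c j ≤ r1 + τ := by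
        simpa [hSdef] using hj
      exact Finset.mem_range.mpr (hcon j hj')
    have h1 := Finset.card_le_card hsub
    rw [Finset.card_image_of_injective _ Fin.val_injective, Finset.card_range] at h1
    omega
  -- K of the values are ≥ r2 - τ
  have hS2 : ∃ j : Fin (2 * K), r2 - τ ≤ c j ∧ (j : ℕ) ≤ K := by
    set S : Finset (Fin (2 * K)) := Finset.univ.filter (fun i => r2 - τ ≤ c i) with hSdef
    have hmem : ∀ k : Fin K, e.symm (Sum.inr k) ∈ S := by
      intro k
      simp only [hSdef, Finset.mem_filter, Finset.mem_univ, true_and]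
      have h := hc (e.symm (Sum.inr k))
      rw [Equiv.apply_symm_apply] at h
      simp only [Sum.elim_inr] at h
      have h2 := abs_le.mp (hΔ2 k)
      linarith [h2.1]
    have hcard : K ≤ S.card := by
      calc K = (Finset.univ : Finset (Fin K)).card := by simp
        _ ≤ S.card := Finset.card_le_card_of_injOn (fun k => e.symm (Sum.inr k))
            (fun k _ => hmem k)
            (fun a _ b _ h => by
              have := e.symm.injective h
              exact Sum.inr_injective this)
    by_contra hcon
    push_neg at hcon
    have hsub : S.image Fin.val ⊆ Finset.Ico (K + 1) (2 * K) := by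
      intro n hn
      simp only [Finset.mem_image] at hn
      obtain ⟨j, hj, rfl⟩ := hn
      have hj' : r2 - τ ≤ c j := by
        simpa [hSdef] using hj
      exact Finset.mem_Ico.mpr ⟨hcon j hj', j.2⟩
    have h1 := Finset.card_le_card hsub
    rw [Finset.card_image_of_injective _ Fin.val_injective, Nat.card_Ico] at h1
    omega
  obtain ⟨j1, hj1, hj1'⟩ := hS1
  obtain ⟨j2, hj2, hj2'⟩ := hS2
  have hlb0 : r1 - τ ≤ c 0 := hlb ⟨0, hK2⟩
  have hubtop : c (2 * K - 1) ≤ r2 + τ := hub ⟨2 * K - 1, by omega⟩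
  have hmono0 : c 0 ≤ c (2 * K - 1) := hmono 0 (2 * K - 1) (by omega) (by omega)
  have hcK1 : c (K - 1) ≤ c j1 := hmono (K - 1) j1 hj1' j1.2
  have hcK2 : c j2 ≤ c K := hmono j2 K hj2' (by omega)
  refine ⟨⟨by linarith, by linarith⟩, by linarith, by linarith⟩
end

section
/- Let τ < M/8 and suppose the 2K erroneous common remainders r̃_1^c, ..., r̃_{2K}^c ∈ [0, M) arise as residues modulo M of r_t^c + Δ_i (each i attached to t = 1 or t = 2, K values each, with |Δ_i| ≤ τ and r_1^c, r_2^c ∈ [0, M)). Sort them cyclically and define circular gaps D_k as in: D_k = r̃_{ς(k+1)}^c − r̃_{ς(k)}^c for k < 2K and D_{2K} = r̃_{ς(1)}^c − r̃_{ς(2K)}^c + M, where ς sorts increasingly. Then there exists exactly one k_0 ∈ {1,...,K} such that D_{k_0} + D_{k_0+K} > M/2. -/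
open Finset

lemma aux_gap (N : ℕ) (hN : 0 < N) (M c : ℝ) (hc : 0 ≤ c) (hcM : 2 * c < M)
    (s : ℕ → ℝ) (μ : ℝ)
    (hmono : ∀ i j, i ≤ j → j < N → s i ≤ s j)
    (hrange : ∀ i < N, 0 ≤ s i ∧ s i < M)
    (hnear : ∀ i < N, ∃ n : ℤ, |s i - μ - n * M| ≤ c)
    (D : ℕ → ℝ)
    (hD : ∀ k, k + 1 < N → D k = s (k + 1) - s k)
    (hDlast : D (N - 1) = s 0 - s (N - 1) + M) :
    ∃ j < N, M - 2 * c ≤ D j := by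
  have hM : 0 < M := lt_of_le_of_lt (by linarith) hcM
  have hch : ∀ i, ∃ n : ℤ, i < N → |s i - μ - n * M| ≤ c := by
    intro i
    by_cases h : i < N
    · obtain ⟨n, hn⟩ := hnear i h; exact ⟨n, fun _ => hn⟩
    · exact ⟨0, fun h' => absurd h' h⟩
  choose n hn using hch
  have step : ∀ i j, i ≤ j → j < N → n j = n i ∨ n j = n i + 1 := by
    intro i j hij hj
    have hi : i < N := lt_of_le_of_lt hij hj
    have hxi := abs_le.mp (hn i hi)
    have hxj := abs_le.mp (hn j hj)
    have hsij : 0 ≤ s j - s i := by linarith [hmono i j hij hj]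
    have hsij2 : s j - s i < M := by
      obtain ⟨h1, h2⟩ := hrange i hi
      obtain ⟨h3, h4⟩ := hrange j hj
      linarith
    -- (n j - n i) * M ∈ (-M, 2M)
    have hlow : -M < ((n j - n i : ℤ) : ℝ) * M := by push_cast; nlinarith
    have hhigh : ((n j - n i : ℤ) : ℝ) * M < 2 * M := by push_cast; nlinarith
    have h1 : (-1 : ℤ) < n j - n i := by
      by_contra h
      push_neg at h
      have : ((n j - n i : ℤ) : ℝ) ≤ -1 := by exact_mod_cast h
      nlinarith
    have h2 : n j - n i < 2 := by
      by_contra h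
      push_neg at h
      have : (2 : ℝ) ≤ ((n j - n i : ℤ) : ℝ) := by exact_mod_cast h
      nlinarith
    omega
  by_cases hex : ∃ a, a < N ∧ n a ≠ n 0
  · set a := Nat.find hex with ha
    obtain ⟨haN, hane⟩ := Nat.find_spec hex
    rw [← ha] at haN hane
    have ha1 : a ≠ 0 := by
      intro h; rw [h] at hane; exact hane rfl
    have hprev : n (a - 1) = n 0 := by
      have := Nat.find_min hex (m := a - 1) (by omega)
      push_neg at this
      exact this (by omega)
    have hstep := step 0 a (by omega) haN
    have hna : n a = n 0 + 1 := by
      rcases hstep with h | h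
      · exact absurd h hane
      · exact h
    refine ⟨a - 1, by omega, ?_⟩
    have hDa : D (a - 1) = s (a - 1 + 1) - s (a - 1) := hD (a - 1) (by omega)
    have heq : a - 1 + 1 = a := by omega
    rw [heq] at hDa
    have hxa := abs_le.mp (hn a haN)
    have hxa1 := abs_le.mp (hn (a - 1) (by omega))
    rw [hDa]
    have hc1 : (↑(n a) : ℝ) = (↑(n 0) : ℝ) + 1 := by rw [hna]; push_cast; ring
    have hc2 : (↑(n (a-1)) : ℝ) = (↑(n 0) : ℝ) := by rw [hprev]
    nlinarith
  · push_neg at hex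
    refine ⟨N - 1, by omega, ?_⟩
    rw [hDlast]
    have h0 := abs_le.mp (hn 0 hN)
    have hlast := abs_le.mp (hn (N - 1) (by omega))
    have := hex (N - 1) (by omega)
    rw [this] at hlast
    linarith

lemma aux_sep (K : ℕ) (hK : 0 < K) (M τ : ℝ) (hM : 0 < M) (hτM : 2 * τ < M)
    (s v : ℕ → ℝ) (t : ℕ → Bool)
    (hmono : ∀ i j, i ≤ j → j < 2 * K → s i ≤ s j)
    (hrange : ∀ i < 2 * K, 0 ≤ s i ∧ s i < M)
    (hvτ : ∀ i < 2 * K, |s i - v i| ≤ τ)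
    (hsame : ∀ i < 2 * K, ∀ j < 2 * K, t i = t j → ∃ m : ℤ, v i - v j = m * M)
    (hdiff : ∀ i < 2 * K, ∀ j < 2 * K, t i ≠ t j → ∀ m : ℤ, 2 * τ < |v i - v j + m * M|)
    (hcount : ((range (2 * K)).filter (fun i => t i = t 0)).card = K)
    (D : ℕ → ℝ)
    (hD : ∀ k, k + 1 < 2 * K → D k = s (k + 1) - s k)
    (hDlast : D (2 * K - 1) = s 0 - s (2 * K - 1) + M) :
    ∃ k0 < K, M - 4 * τ ≤ D k0 + D (k0 + K) := by
  have hN0 : 0 < 2 * K := by omega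
  have hτ0 : 0 ≤ τ := le_trans (abs_nonneg _) (hvτ 0 hN0)
  have vlb : ∀ i < 2 * K, -τ ≤ v i := by
    intro i hi
    have := abs_le.mp (hvτ i hi)
    have := (hrange i hi).1
    linarith [this]
  have vub : ∀ i < 2 * K, v i < M + τ := by
    intro i hi
    have := abs_le.mp (hvτ i hi)
    have := (hrange i hi).2
    linarith [this]
  -- key separation
  have key : ∀ i < 2 * K, ∀ j < 2 * K, v i < v j → 2 * τ < v j - v i := by
    intro i hi j hj hlt
    by_cases ht : t j = t i
    · obtain ⟨m, hm⟩ := hsame j hj i hi ht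
      have hmpos : 0 < m := by
        by_contra h
        push_neg at h
        have : (m : ℝ) ≤ 0 := by exact_mod_cast h
        nlinarith
      have : (1 : ℝ) ≤ (m : ℝ) := by exact_mod_cast hmpos
      nlinarith
    · have h := hdiff j hj i hi ht 0
      rw [abs_of_pos (by push_cast; linarith)] at h
      push_cast at h
      linarith
  have vmono : ∀ i j, i ≤ j → j < 2 * K → v i ≤ v j := by
    intro i j hij hj
    by_contra h
    push_neg at h
    have h2 := key j hj i (lt_of_le_of_lt hij hj) h
    have hxi := abs_le.mp (hvτ i (lt_of_le_of_lt hij hj))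
    have hxj := abs_le.mp (hvτ j hj)
    have := hmono i j hij hj
    linarith
  -- existence of a different cluster point
  have htex : ∃ i < 2 * K, t i ≠ t 0 := by
    by_contra h
    push_neg at h
    have : (range (2 * K)).filter (fun i => t i = t 0) = range (2 * K) := by
      apply Finset.filter_true_of_mem
      intro i hi
      exact h i (mem_range.mp hi)
    rw [this, Finset.card_range] at hcount
    omega
  have hex : ∃ a, a < 2 * K ∧ v a ≠ v 0 := by
    obtain ⟨i, hi, hti⟩ := htex
    refine ⟨i, hi, ?_⟩
    have := hdiff i hi 0 hN0 hti 0
    push_cast at this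
    intro heq
    rw [heq] at this
    simp at this
    linarith
  set b1 := Nat.find hex with hb1def
  obtain ⟨hb1N, hb1v⟩ := Nat.find_spec hex
  rw [← hb1def] at hb1N hb1v
  have hb1min : ∀ i, i < b1 → v i = v 0 := by
    intro i hi
    have := Nat.find_min hex (m := i) (by omega)
    push_neg at this
    exact this (by omega)
  have hb1pos : 0 < b1 := by
    rcases Nat.eq_zero_or_pos b1 with h | h
    · rw [h] at hb1v; exact absurd rfl hb1v
    · exact h
  have hw2gt : v 0 < v b1 := lt_of_le_of_ne (vmono 0 b1 (by omega) hb1N) (Ne.symm hb1v)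
  have hw2sep : 2 * τ < v b1 - v 0 := key 0 hN0 b1 hb1N hw2gt
  -- middle cluster is different from t 0
  have tb1 : t b1 ≠ t 0 := by
    intro heq
    obtain ⟨m, hm⟩ := hsame b1 hb1N 0 hN0 heq
    have hm1 : 0 < m := by
      by_contra h
      push_neg at h
      have : (m : ℝ) ≤ 0 := by exact_mod_cast h
      nlinarith
    have hm1' : (1 : ℝ) ≤ (m : ℝ) := by exact_mod_cast hm1
    have hvb1 : v 0 + M ≤ v b1 := by nlinarith
    obtain ⟨i, hi, hti⟩ := htex
    rcases lt_or_ge i b1 with hlt | hge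
    · have := hb1min i hlt
      have hd := hdiff i hi 0 hN0 hti 0
      rw [this] at hd
      simp at hd
      linarith
    · have hvi : v b1 ≤ v i := vmono b1 i hge hi
      have hne : v i ≠ v b1 := by
        intro heq2
        have hd := hdiff i hi b1 hb1N (by rw [heq]; exact hti) 0
        rw [heq2] at hd
        simp at hd
        linarith
      have : v b1 < v i := lt_of_le_of_ne hvi (Ne.symm hne)
      have := key b1 hb1N i hi this
      have := vub i hi
      have := vlb 0 hN0
      linarith
  -- all different-cluster points have value v b1
  have mid : ∀ i < 2 * K, t i ≠ t 0 → v i = v b1 := by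
    intro i hi hti
    have htib1 : t i = t b1 := by
      revert hti tb1
      cases t i <;> cases t b1 <;> cases t 0 <;> simp
    obtain ⟨m, hm⟩ := hsame i hi b1 hb1N htib1
    have hvi_lb : -τ ≤ v 0 := vlb 0 hN0
    have hvi0 : v 0 ≤ v i := vmono 0 i (by omega) hi
    have hd0 : 2 * τ < |v i - v 0| := by
      have := hdiff i hi 0 hN0 hti 0
      push_cast at this
      simpa using this
    have hvigt : 2 * τ < v i - v 0 := by
      rw [abs_of_nonneg (by linarith)] at hd0
      exact hd0
    have hm0 : m = 0 := by
      by_contra h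
      rcases lt_or_gt_of_ne h with hneg | hpos
      · -- m ≤ -1 : v i ≤ v b1 - M
        have : (m : ℝ) ≤ -1 := by exact_mod_cast (by omega : m ≤ -1)
        have hvile : v i ≤ v b1 - M := by nlinarith
        have := vub b1 hb1N
        linarith
      · -- m ≥ 1 : v i ≥ v b1 + M
        have : (1 : ℝ) ≤ (m : ℝ) := by exact_mod_cast hpos
        have hvige : v b1 + M ≤ v i := by nlinarith
        have := vub i hi
        linarith
    rw [hm0] at hm
    push_cast at hm
    linarith
  -- w2 + 2τ < w1 + M
  have hw2ub : v b1 + 2 * τ < v 0 + M := by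
    have hd := hdiff b1 hb1N 0 hN0 tb1 (-1)
    have hub : v b1 - v 0 + (-1 : ℤ) * M < 2 * τ := by
      push_cast
      have := vub b1 hb1N
      have := vlb 0 hN0
      linarith
    rcases le_or_gt 0 (v b1 - v 0 + (-1 : ℤ) * M) with h | h
    · push_cast at h hub
      rw [abs_of_nonneg (by push_cast; linarith)] at hd
      push_cast at hd
      linarith
    · rw [abs_of_neg (by push_cast at h ⊢; linarith)] at hd
      push_cast at hd
      linarith
  -- values of the t-0 cluster
  have tval : ∀ i < 2 * K, t i = t 0 → v i = v 0 ∨ v i = v 0 + M := by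
    intro i hi hti
    obtain ⟨m, hm⟩ := hsame i hi 0 hN0 hti
    have h0 : v 0 ≤ v i := vmono 0 i (by omega) hi
    have h1 : 0 ≤ m := by
      by_contra h
      push_neg at h
      have : (m : ℝ) ≤ -1 := by exact_mod_cast (by omega : m ≤ -1)
      nlinarith
    have h2 : m ≤ 1 := by
      by_contra h
      push_neg at h
      have : (2 : ℝ) ≤ (m : ℝ) := by exact_mod_cast (by omega : (2:ℤ) ≤ m)
      have := vub i hi
      have := vlb 0 hN0
      nlinarith
    interval_cases m
    · left; push_cast at hm; linarith
    · right; push_cast at hm; linarith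
  -- define b2
  by_cases hex2 : ∃ a, a < 2 * K ∧ b1 ≤ a ∧ v a ≠ v b1
  case pos =>
    set b2 := Nat.find hex2 with hb2def
    obtain ⟨hb2N, hb2ge, hb2v⟩ := Nat.find_spec hex2
    rw [← hb2def] at hb2N hb2ge hb2v
    have hmid : ∀ i, b1 ≤ i → i < b2 → v i = v b1 := by
      intro i h1 h2
      have := Nat.find_min hex2 (m := i) (by omega)
      push_neg at this
      exact this (by omega) h1
    have hhigh : ∀ i, b2 ≤ i → i < 2 * K → v i = v 0 + M := by
      intro i hge hi
      have hvb2 : v b1 ≤ v b2 := vmono b1 b2 hb2ge hb2N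
      have hvb2' : v b1 < v b2 := lt_of_le_of_ne hvb2 (Ne.symm hb2v)
      have hvi : v b2 ≤ v i := vmono b2 i hge hi
      have hvi' : v b1 < v i := lt_of_lt_of_le hvb2' hvi
      have hti : t i = t 0 := by
        by_contra h
        have := mid i hi h
        linarith [this ▸ hvi']
      rcases tval i hi hti with h | h
      · exfalso; linarith [hw2gt]
      · exact h
    have hfilter : (range (2 * K)).filter (fun i => ¬(t i = t 0)) = Finset.Ico b1 b2 := by
      ext i
      simp only [mem_filter, mem_range, Finset.mem_Ico]
      constructor
      · rintro ⟨hi, hti⟩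
        have hvi := mid i hi hti
        constructor
        · by_contra h
          push_neg at h
          have := hb1min i h
          rw [this] at hvi
          exact absurd hvi (ne_of_lt hw2gt)
        · by_contra h
          push_neg at h
          have := hhigh i h hi
          rw [this] at hvi
          linarith [hw2ub, hτ0]
      · rintro ⟨hge, hlt⟩
        have hi : i < 2 * K := lt_of_lt_of_le hlt (by omega)
        have hvi := hmid i hge hlt
        refine ⟨hi, ?_⟩
        intro hti
        rcases tval i hi hti with h | h
        · rw [h] at hvi; exact absurd hvi (ne_of_lt hw2gt)
        · rw [h] at hvi; linarith [hw2ub, hτ0]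
    have hcount2 : ((range (2 * K)).filter (fun i => ¬(t i = t 0))).card = K := by
      have := Finset.card_filter_add_card_filter_not
        (s := range (2 * K)) (p := fun i => t i = t 0)
      rw [Finset.card_range] at this
      omega
    have hIco : b2 - b1 = K := by
      rw [hfilter] at hcount2
      rw [Nat.card_Ico] at hcount2
      exact hcount2
    have hb2eq : b2 = b1 + K := by omega
    -- now the gaps
    have hb1K : b1 ≤ K := by omega
    refine ⟨b1 - 1, by omega, ?_⟩
    have heq1 : b1 - 1 + 1 = b1 := by omega
    have hD1 : D (b1 - 1) = s b1 - s (b1 - 1) := by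
      have := hD (b1 - 1) (by omega)
      rw [heq1] at this
      exact this
    have hv1 : v (b1 - 1) = v 0 := hb1min (b1 - 1) (by omega)
    have hx1 := abs_le.mp (hvτ (b1 - 1) (by omega))
    have hxb1 := abs_le.mp (hvτ b1 hb1N)
    have heq2 : b1 - 1 + K = b2 - 1 := by omega
    rcases lt_or_ge b2 (2 * K) with hb2lt | hb2ge'
    · have hD2 : D (b2 - 1) = s b2 - s (b2 - 1) := by
        have := hD (b2 - 1) (by omega)
        have h : b2 - 1 + 1 = b2 := by omega
        rw [h] at this
        exact this
      have hvb2 : v b2 = v 0 + M := hhigh b2 (le_refl _) hb2lt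
      have hvb21 : v (b2 - 1) = v b1 := hmid (b2 - 1) (by omega) (by omega)
      have hxb2 := abs_le.mp (hvτ b2 hb2lt)
      have hxb21 := abs_le.mp (hvτ (b2 - 1) (by omega))
      rw [heq2, hD1, hD2]
      rw [hv1] at hx1
      rw [hvb2] at hxb2
      rw [hvb21] at hxb21
      linarith
    · have hb2N : b2 = 2 * K := by omega
      have hD2 : D (b2 - 1) = s 0 - s (2 * K - 1) + M := by
        rw [hb2N]; exact hDlast
      have hv0 : v 0 = v 0 := rfl
      have hvlast : v (2 * K - 1) = v b1 := hmid (2 * K - 1) (by omega) (by omega)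
      have hx0 := abs_le.mp (hvτ 0 hN0)
      have hxlast := abs_le.mp (hvτ (2 * K - 1) (by omega))
      rw [heq2, hD1, hD2]
      rw [hv1] at hx1
      rw [hvlast] at hxlast
      linarith
  case neg =>
    push_neg at hex2
    have hmid : ∀ i, b1 ≤ i → i < 2 * K → v i = v b1 := fun i h1 h2 => hex2 i h2 h1
    have hfilter : (range (2 * K)).filter (fun i => ¬(t i = t 0)) = Finset.Ico b1 (2 * K) := by
      ext i
      simp only [mem_filter, mem_range, Finset.mem_Ico]
      constructor
      · rintro ⟨hi, hti⟩
        have hvi := mid i hi hti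
        refine ⟨?_, hi⟩
        by_contra h
        push_neg at h
        have := hb1min i h
        rw [this] at hvi
        exact absurd hvi (ne_of_lt hw2gt)
      · rintro ⟨hge, hlt⟩
        have hvi := hmid i hge hlt
        refine ⟨hlt, ?_⟩
        intro hti
        rcases tval i hlt hti with h | h
        · rw [h] at hvi; exact absurd hvi (ne_of_lt hw2gt)
        · rw [h] at hvi; linarith [hw2ub, hτ0]
    have hcount2 : ((range (2 * K)).filter (fun i => ¬(t i = t 0))).card = K := by
      have := Finset.card_filter_add_card_filter_not
        (s := range (2 * K)) (p := fun i => t i = t 0)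
      rw [Finset.card_range] at this
      omega
    have hb1K : b1 = K := by
      rw [hfilter, Nat.card_Ico] at hcount2
      omega
    refine ⟨b1 - 1, by omega, ?_⟩
    have heq1 : b1 - 1 + 1 = b1 := by omega
    have hD1 : D (b1 - 1) = s b1 - s (b1 - 1) := by
      have := hD (b1 - 1) (by omega)
      rw [heq1] at this
      exact this
    have hv1 : v (b1 - 1) = v 0 := hb1min (b1 - 1) (by omega)
    have hx1 := abs_le.mp (hvτ (b1 - 1) (by omega))
    have hxb1 := abs_le.mp (hvτ b1 hb1N)
    have heq2 : b1 - 1 + K = 2 * K - 1 := by omega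
    have hvlast : v (2 * K - 1) = v b1 := hmid (2 * K - 1) (by omega) (by omega)
    have hx0 := abs_le.mp (hvτ 0 hN0)
    have hxlast := abs_le.mp (hvτ (2 * K - 1) (by omega))
    rw [heq2, hD1, hDlast]
    rw [hv1] at hx1
    rw [hvlast] at hxlast
    linarith

/-- Lemma 2 (gap detection): exactly one antipodal pair of
circular gaps has sum exceeding `M/2`. (0-based indexing.) -/
theorem stmt_19 (K : ℕ) (hK : 0 < K) (M τ : ℝ) (hM : 0 < M) (hτ : τ < M / 8)
    (r1 r2 : ℝ) (h1 : 0 ≤ r1) (h1' : r1 < M) (h2 : 0 ≤ r2) (h2' : r2 < M)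
    (Δ1 Δ2 : Fin K → ℝ) (hΔ1 : ∀ k, |Δ1 k| ≤ τ) (hΔ2 : ∀ k, |Δ2 k| ≤ τ)
    (s : ℕ → ℝ)
    (hmono : ∀ i j, i ≤ j → j < 2 * K → s i ≤ s j)
    (hrange : ∀ i < 2 * K, 0 ≤ s i ∧ s i < M)
    (e : Fin (2 * K) ≃ (Fin K ⊕ Fin K))
    (hs : ∀ i : Fin (2 * K), ∃ n : ℤ,
      s i = Sum.elim (fun k => r1 + Δ1 k) (fun k => r2 + Δ2 k) (e i) + n * M)
    (D : ℕ → ℝ)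
    (hD : ∀ k, k + 1 < 2 * K → D k = s (k + 1) - s k)
    (hDlast : D (2 * K - 1) = s 0 - s (2 * K - 1) + M) :
    ∃! k0 : ℕ, k0 < K ∧ M / 2 < D k0 + D (k0 + K) := by
  classical
  have hN0 : 0 < 2 * K := by omega
  have hτ0 : 0 ≤ τ := le_trans (abs_nonneg _) (hΔ1 ⟨0, hK⟩)
  -- the cluster of each index, and the "center" value
  set t : ℕ → Bool := fun i => if h : i < 2 * K then (e ⟨i, h⟩).isLeft else true with ht
  set δ : ℕ → ℝ := fun i => if h : i < 2 * K then Sum.elim Δ1 Δ2 (e ⟨i, h⟩) else 0 with hδ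
  set v : ℕ → ℝ := fun i => s i - δ i with hv
  have hvτ : ∀ i < 2 * K, |s i - v i| ≤ τ := by
    intro i hi
    have : s i - v i = δ i := by rw [hv]; ring
    rw [this, hδ]
    simp only [dif_pos hi]
    rcases e ⟨i, hi⟩ with k | k
    · simpa using hΔ1 k
    · simpa using hΔ2 k
  have hn : ∀ i, ∃ n : ℤ, i < 2 * K → v i = (if t i then r1 else r2) + n * M := by
    intro i
    by_cases hi : i < 2 * K
    · obtain ⟨n, hsn⟩ := hs ⟨i, hi⟩
      refine ⟨n, fun _ => ?_⟩
      rw [hv, hδ, ht]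
      simp only [dif_pos hi]
      rcases hx : e ⟨i, hi⟩ with k | k <;> rw [hx] at hsn <;>
        simp only [Sum.elim_inl, Sum.elim_inr, Sum.isLeft_inl, Sum.isLeft_inr] at hsn ⊢ <;>
        simp only [if_true, if_false, Bool.false_eq_true] <;>
      · have : s i = s (⟨i, hi⟩ : Fin (2 * K)) := rfl
        rw [this, hsn]; ring
    · exact ⟨0, fun h => absurd h hi⟩
  choose n hn using hn
  -- counting
  have hcardL : ((range (2 * K)).filter (fun i => t i = true)).card = K := by
    have himg : (range (2 * K)).filter (fun i => t i = true)
        = (Finset.univ : Finset (Fin K)).image (fun k => ((e.symm (Sum.inl k)) : Fin (2 * K)).1) := by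
      ext i
      simp only [mem_filter, mem_range, Finset.mem_image, Finset.mem_univ, true_and]
      constructor
      · rintro ⟨hi, hti⟩
        rw [ht] at hti
        simp only [dif_pos hi] at hti
        rcases hx : e ⟨i, hi⟩ with k | k
        · refine ⟨k, ?_⟩
          rw [← hx, Equiv.symm_apply_apply]
        · rw [hx] at hti; simp at hti
      · rintro ⟨k, rfl⟩
        have hlt := (e.symm (Sum.inl k)).2
        refine ⟨hlt, ?_⟩
        rw [ht]
        simp only [dif_pos hlt]
        have : (⟨((e.symm (Sum.inl k)) : Fin (2 * K)).1, hlt⟩ : Fin (2 * K)) = e.symm (Sum.inl k) :=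
          Fin.eta _ _
        rw [this, Equiv.apply_symm_apply]
        rfl
    rw [himg, Finset.card_image_of_injective _ ?_, Finset.card_univ, Fintype.card_fin]
    intro a b hab
    have := Fin.val_injective hab
    have := e.symm.injective this
    exact Sum.inl_injective this
  have hcount : ((range (2 * K)).filter (fun i => t i = t 0)).card = K := by
    cases h0 : t 0
    · have := Finset.card_filter_add_card_filter_not
        (s := range (2 * K)) (p := fun i => t i = true)
      rw [Finset.card_range, hcardL] at this
      have heq : (range (2 * K)).filter (fun i => t i = false)
          = (range (2 * K)).filter (fun i => ¬(t i = true)) := by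
        apply Finset.filter_congr
        intro i _
        cases t i <;> simp
      rw [heq]
      omega
    · exact hcardL
  -- nonnegativity of gaps
  have Dnonneg : ∀ j < 2 * K, 0 ≤ D j := by
    intro j hj
    by_cases h : j + 1 < 2 * K
    · rw [hD j h]
      linarith [hmono j (j + 1) (by omega) h]
    · have hj' : j = 2 * K - 1 := by omega
      rw [hj', hDlast]
      obtain ⟨hl, hr⟩ := hrange (2 * K - 1) (by omega)
      obtain ⟨hl0, _⟩ := hrange 0 hN0
      linarith
  -- existence
  have hexist : ∃ k0 < K, M / 2 < D k0 + D (k0 + K) := by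
    by_cases hsep : ∀ m : ℤ, 2 * τ < |r1 - r2 + m * M|
    · -- separated case
      have hsame : ∀ i < 2 * K, ∀ j < 2 * K, t i = t j → ∃ m : ℤ, v i - v j = m * M := by
        intro i hi j hj hij
        refine ⟨n i - n j, ?_⟩
        rw [hn i hi, hn j hj, hij]
        push_cast
        ring
      have hdiff : ∀ i < 2 * K, ∀ j < 2 * K, t i ≠ t j → ∀ m : ℤ, 2 * τ < |v i - v j + m * M| := by
        intro i hi j hj hij m
        rw [hn i hi, hn j hj]
        cases hti : t i <;> cases htj : t j <;> rw [hti, htj] at hij <;> try simp at hij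
        · -- t i = false, t j = true : r2 - r1
          have hrw : (if false then r1 else r2) + ↑(n i) * M - ((if true then r1 else r2) + ↑(n j) * M) + ↑m * M
              = -(r1 - r2 + (↑(-(n i - n j + m)) : ℝ) * M) := by norm_num; push_cast; ring
          rw [hrw, abs_neg]
          exact_mod_cast hsep (-(n i - n j + m))
        · -- t i = true, t j = false : r1 - r2
          have hrw : (if true then r1 else r2) + ↑(n i) * M - ((if false then r1 else r2) + ↑(n j) * M) + ↑m * M
              = r1 - r2 + (↑(n i - n j + m) : ℝ) * M := by norm_num; push_cast; ring
          rw [hrw]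
          exact_mod_cast hsep (n i - n j + m)
      obtain ⟨k0, hk0, hge⟩ := aux_sep K hK M τ hM (by linarith) s v t hmono hrange hvτ hsame hdiff hcount D hD hDlast
      exact ⟨k0, hk0, by linarith⟩
    · -- merged case
      push_neg at hsep
      obtain ⟨m0, hm0⟩ := hsep
      set μ : ℝ := (r1 + (r2 - m0 * M)) / 2 with hμ
      have hnear : ∀ i < 2 * K, ∃ nn : ℤ, |s i - μ - nn * M| ≤ 2 * τ := by
        intro i hi
        have hvi := hn i hi
        have hsd : |s i - v i| ≤ τ := hvτ i hi
        cases hti : t i <;> rw [hti] at hvi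
        · -- cluster 2
          rw [if_neg Bool.false_ne_true] at hvi
          refine ⟨n i + m0, ?_⟩
          have : s i - μ - (↑(n i + m0) : ℝ) * M = (s i - v i) - (r1 - r2 + m0 * M) / 2 := by
            rw [hvi, hμ]; push_cast; ring
          rw [this]
          calc |(s i - v i) - (r1 - r2 + m0 * M) / 2|
              ≤ |s i - v i| + |(r1 - r2 + m0 * M) / 2| := abs_sub _ _
            _ ≤ τ + τ := by
                refine add_le_add hsd ?_
                rw [abs_div]
                simp only [abs_two]
                linarith [hm0]
            _ = 2 * τ := by ring
        · -- cluster 1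
          rw [if_pos rfl] at hvi
          refine ⟨n i, ?_⟩
          have : s i - μ - (↑(n i) : ℝ) * M = (s i - v i) + (r1 - r2 + m0 * M) / 2 := by
            rw [hvi, hμ]; push_cast; ring
          rw [this]
          calc |(s i - v i) + (r1 - r2 + m0 * M) / 2|
              ≤ |s i - v i| + |(r1 - r2 + m0 * M) / 2| := abs_add_le _ _
            _ ≤ τ + τ := by
                refine add_le_add hsd ?_
                rw [abs_div]
                simp only [abs_two]
                linarith [hm0]
            _ = 2 * τ := by ring
      obtain ⟨j, hj, hgap⟩ := aux_gap (2 * K) hN0 M (2 * τ) (by linarith) (by linarith)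
        s μ hmono hrange hnear D hD hDlast
      rcases lt_or_ge j K with hjK | hjK
      · refine ⟨j, hjK, ?_⟩
        have := Dnonneg (j + K) (by omega)
        linarith
      · refine ⟨j - K, by omega, ?_⟩
        have hjk : j - K + K = j := by omega
        rw [hjk]
        have := Dnonneg (j - K) (by omega)
        linarith
  -- uniqueness via total sum
  have hsumD : ∑ j ∈ range (2 * K), D j = M := by
    have h2K1 : 2 * K = (2 * K - 1) + 1 := by omega
    rw [h2K1, Finset.sum_range_succ]
    have hcg : ∀ j ∈ range (2 * K - 1), D j = s (j + 1) - s j := by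
      intro j hj
      exact hD j (by have := mem_range.mp hj; omega)
    rw [Finset.sum_congr rfl hcg, Finset.sum_range_sub s (2 * K - 1)]
    rw [← h2K1] at *
    rw [hDlast]
    ring
  have hsplit : ∑ k ∈ range K, (D k + D (k + K)) = M := by
    rw [Finset.sum_add_distrib]
    have h1 : ∑ k ∈ range K, D (k + K) = ∑ j ∈ Finset.Ico K (2 * K), D j := by
      rw [Finset.sum_Ico_eq_sum_range]
      have : 2 * K - K = K := by omega
      rw [this]
      apply Finset.sum_congr rfl
      intro i _
      rw [Nat.add_comm]
    rw [h1]
    rw [Finset.range_eq_Ico, Finset.sum_Ico_consecutive D (Nat.zero_le K) (by omega : K ≤ 2 * K)]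
    rw [← Finset.range_eq_Ico, hsumD]
  obtain ⟨k0, hk0K, hk0⟩ := hexist
  refine ⟨k0, ⟨hk0K, hk0⟩, ?_⟩
  rintro y ⟨hyK, hy⟩
  by_contra hne
  have hsub : ({y, k0} : Finset ℕ) ⊆ range K := by
    intro x hx
    simp only [Finset.mem_insert, Finset.mem_singleton] at hx
    rcases hx with rfl | rfl <;> simp [mem_range, hyK, hk0K]
  have hpair : ∑ x ∈ ({y, k0} : Finset ℕ), (D x + D (x + K)) = (D y + D (y + K)) + (D k0 + D (k0 + K)) :=
    Finset.sum_pair hne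
  have hle : ∑ x ∈ ({y, k0} : Finset ℕ), (D x + D (x + K)) ≤ ∑ k ∈ range K, (D k + D (k + K)) := by
    apply Finset.sum_le_sum_of_subset_of_nonneg hsub
    intro i hi _
    have hiK := mem_range.mp hi
    have := Dnonneg i (by omega)
    have := Dnonneg (i + K) (by omega)
    linarith
  rw [hsplit, hpair] at hle
  linarith
end
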